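/- arXiv:math/0008133 — 7 statements merged into one kernel-verified Lean document; each statement's English description precedes it below -/
import Mathlib

section
/- Let R be a commutative ring and let (p_n)_{n ∈ ℕ} be a sequence of idempotent elements of R (p_n² = p_n) satisfying p_n · p_{n+1} = p_n for all n. Then I := ⋃_n p_n R is an ideal of R, and for every R-module M one has I • M = ⋃_n p_n • M, i.e., an element of M lies in I • M if and only if it equals p_n • m for some n ∈ ℕ and m ∈ M. -/
/-- If `(p n)` is a sequence of idempotents in a commutative ring `R` with
`p n * p (n+1) = p n`, then `⋃ n, p n R` is an ideal `I` of `R`, and for every `R`-module `M`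
one has `I • M = ⋃ n, p n • M`: an element of `M` lies in `I • M` iff it is of the form
`p n • m`. -/
theorem union_idempotents_ideal_smul (R : Type*) [CommRing R] (p : ℕ → R)
    (hidem : ∀ n, p n * p n = p n) (hchain : ∀ n, p n * p (n + 1) = p n) :
    (∃ I : Ideal R, (I : Set R) = ⋃ n, (Ideal.span {p n} : Set R)) ∧
    (∀ (M : Type*) [AddCommGroup M] [Module R M] (I : Ideal R),
      (I : Set R) = (⋃ n, (Ideal.span {p n} : Set R)) →
      ∀ x : M, x ∈ I • (⊤ : Submodule R M) ↔ ∃ (n : ℕ) (m : M), x = p n • m) := by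
  have hle : ∀ n k, n ≤ k → p n * p k = p n := by
    intro n k hnk
    induction k with
    | zero =>
      have : n = 0 := Nat.le_zero.mp hnk
      subst this; exact hidem 0
    | succ k ih =>
      rcases Nat.lt_or_ge n (k + 1) with h | h
      · have hnk' := ih (Nat.lt_succ_iff.mp h)
        calc p n * p (k + 1) = (p n * p k) * p (k + 1) := by rw [hnk']
          _ = p n * (p k * p (k + 1)) := by ring
          _ = p n * p k := by rw [hchain]
          _ = p n := hnk'
      · have : n = k + 1 := le_antisymm hnk h
        subst this; exact hidem _
  have hmono : Monotone (fun n => Ideal.span ({p n} : Set R)) := by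
    apply monotone_nat_of_le_succ
    intro n
    rw [Ideal.span_singleton_le_span_singleton]
    exact ⟨p n, by rw [mul_comm]; exact (hchain n).symm⟩
  constructor
  · exact ⟨iSup (fun n => Ideal.span {p n}),
      Submodule.coe_iSup_of_directed _ hmono.directed_le⟩
  · intro M _ _ I hI x
    have hmem : ∀ y : R, y ∈ I ↔ ∃ n, p n ∣ y := by
      intro y
      rw [← SetLike.mem_coe, hI]
      simp [Ideal.mem_span_singleton]
    constructor
    · intro hx
      refine Submodule.smul_induction_on hx ?_ ?_
      · intro r hr m _
        obtain ⟨n, c, hc⟩ := (hmem r).mp hr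
        exact ⟨n, c • m, by rw [hc, mul_smul]⟩
      · rintro x y ⟨n, a, rfl⟩ ⟨k, b, rfl⟩
        rcases le_total n k with h | h
        · exact ⟨k, p n • a + b, by
            rw [smul_add, smul_smul, mul_comm (p k) (p n), hle n k h]⟩
        · exact ⟨n, a + p k • b, by
            rw [smul_add, smul_smul, mul_comm (p n) (p k), hle k n h]⟩
    · rintro ⟨n, m, rfl⟩
      exact Submodule.smul_mem_smul ((hmem (p n)).mpr ⟨n, dvd_refl _⟩) trivial
end

section
/- Let R be a commutative ring and let 𝔪 be a maximal ideal of R such that 𝔪 = ⋃_n p_n R for a sequence of idempotent elements (p_n)_{n ∈ ℕ} of R satisfying p_n · p_{n+1} = p_n for all n. Then for every R-module M, the localization map M → M_𝔪 of M at 𝔪 descends to an isomorphism of R-modules M/𝔪M ≅ M_𝔪. -/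
/-- If a maximal ideal `𝔪` of a commutative ring `R` is the increasing union of the principal
ideals generated by a sequence of idempotents `p n` with `p n * p (n+1) = p n`, then for every
`R`-module `M` the localization map `M → M_𝔪` descends to an `R`-module isomorphism
`M / 𝔪 M ≃ M_𝔪`. -/
theorem quotient_iso_localization_of_idempotent_maximal_ideal
    (R : Type*) [CommRing R] (𝔪 : Ideal R) [𝔪.IsMaximal] (p : ℕ → R)
    (hidem : ∀ n, p n * p n = p n) (hchain : ∀ n, p n * p (n + 1) = p n)
    (hm : (𝔪 : Set R) = ⋃ n, (Ideal.span {p n} : Set R))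
    (M : Type*) [AddCommGroup M] [Module R M] :
    ∃ e : (M ⧸ (𝔪 • (⊤ : Submodule R M))) ≃ₗ[R] LocalizedModule 𝔪.primeCompl M,
      ∀ m : M, e (Submodule.Quotient.mk m) = LocalizedModule.mkLinearMap 𝔪.primeCompl M m := by
  have hpmem : ∀ n, p n ∈ 𝔪 := by
    intro n
    have : (p n) ∈ ⋃ n, (Ideal.span {p n} : Set R) :=
      Set.mem_iUnion.2 ⟨n, Ideal.subset_span rfl⟩
    rw [← hm] at this
    exact this
  have hchain' : ∀ n N, n ≤ N → p n * p N = p n := by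
    intro n N h
    induction N with
    | zero =>
      have : n = 0 := Nat.le_zero.mp h
      subst this; exact hidem 0
    | succ N ih =>
      rcases Nat.lt_or_ge n (N + 1) with h' | h'
      · have hn : p n * p N = p n := ih (Nat.lt_succ_iff.mp h')
        calc p n * p (N + 1) = (p n * p N) * p (N + 1) := by rw [hn]
          _ = p n * (p N * p (N + 1)) := by ring
          _ = p n * p N := by rw [hchain]
          _ = p n := hn
      · have : n = N + 1 := le_antisymm h h'
        subst this; exact hidem _
  -- every element of 𝔪 • ⊤ is fixed by some p n
  have key : ∀ x ∈ (𝔪 • (⊤ : Submodule R M)), ∃ n, p n • x = x := by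
    intro x hx
    refine Submodule.smul_induction_on hx ?_ ?_
    · intro r hr m _
      have hr' : r ∈ ⋃ n, (Ideal.span {p n} : Set R) := by rw [← hm]; exact hr
      obtain ⟨n, hn⟩ := Set.mem_iUnion.mp hr'
      obtain ⟨a, rfl⟩ := Ideal.mem_span_singleton'.mp hn
      refine ⟨n, ?_⟩
      rw [← mul_smul, mul_comm, mul_assoc, hidem]
    · rintro x y ⟨n, hn⟩ ⟨k, hk⟩
      refine ⟨max n k, ?_⟩
      have hxn : p (max n k) • x = x := by
        conv_lhs => rw [← hn]
        rw [← mul_smul, mul_comm, hchain' n _ (le_max_left n k), hn]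
      have hyk : p (max n k) • y = y := by
        conv_lhs => rw [← hk]
        rw [← mul_smul, mul_comm, hchain' k _ (le_max_right n k), hk]
      rw [smul_add, hxn, hyk]
  have hcomp : ∀ n, (1 - p n) ∈ 𝔪.primeCompl := by
    intro n hmem
    have h1 : (1 : R) ∈ 𝔪 := by
      have := 𝔪.add_mem hmem (hpmem n)
      simpa using this
    exact (Ideal.IsMaximal.ne_top ‹𝔪.IsMaximal›) (Ideal.eq_top_iff_one 𝔪 |>.mpr h1)
  -- elements of 𝔪 annihilate the quotient
  have hkill : ∀ r ∈ 𝔪, ∀ q : M ⧸ (𝔪 • (⊤ : Submodule R M)), r • q = 0 := by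
    intro r hr q
    obtain ⟨m, rfl⟩ := Submodule.Quotient.mk_surjective _ q
    rw [← Submodule.Quotient.mk_smul, Submodule.Quotient.mk_eq_zero]
    exact Submodule.smul_mem_smul hr Submodule.mem_top
  have hloc : IsLocalizedModule 𝔪.primeCompl (𝔪 • (⊤ : Submodule R M)).mkQ := by
    constructor
    · intro s
      obtain ⟨t, r, hr, htr⟩ := Ideal.IsMaximal.exists_inv ‹𝔪.IsMaximal› s.2
      rw [isUnit_iff_exists]
      refine ⟨algebraMap R _ t, ?_, ?_⟩
      · rw [← map_mul]
        refine LinearMap.ext fun q => ?_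
        have : (t * (s : R)) • q = q := by
          have h2 : t * (s : R) = 1 - r := by linear_combination htr
          rw [h2, sub_smul, one_smul, hkill r hr q, sub_zero]
        simpa [Module.algebraMap_end_apply, smul_smul] using this
      · rw [← map_mul]
        refine LinearMap.ext fun q => ?_
        have : ((s : R) * t) • q = q := by
          have h2 : (s : R) * t = 1 - r := by rw [mul_comm]; linear_combination htr
          rw [h2, sub_smul, one_smul, hkill r hr q, sub_zero]
        simpa [Module.algebraMap_end_apply, smul_smul] using this
    · intro y
      obtain ⟨m, rfl⟩ := Submodule.Quotient.mk_surjective _ y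
      exact ⟨⟨m, 1⟩, one_smul _ _⟩
    · intro m m' h
      have h' : (Submodule.Quotient.mk m : M ⧸ (𝔪 • (⊤ : Submodule R M))) =
          Submodule.Quotient.mk m' := h
      have hmm : m - m' ∈ 𝔪 • (⊤ : Submodule R M) :=
        (Submodule.Quotient.eq _).mp h'
      obtain ⟨n, hn⟩ := key _ hmm
      refine ⟨⟨1 - p n, hcomp n⟩, ?_⟩
      show (1 - p n) • m = (1 - p n) • m'
      have h0 : (1 - p n) • (m - m') = 0 := by
        rw [sub_smul, one_smul, hn, sub_self]
      rw [smul_sub] at h0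
      exact sub_eq_zero.mp h0
  refine ⟨(IsLocalizedModule.iso 𝔪.primeCompl (𝔪 • (⊤ : Submodule R M)).mkQ).symm, ?_⟩
  intro m
  have := IsLocalizedModule.iso_symm_comp 𝔪.primeCompl (𝔪 • (⊤ : Submodule R M)).mkQ
  have := LinearMap.congr_fun this m
  simpa using this
end

section
/- Let G be a group, s₀ ∈ G, and S := Z(C(s₀)) the standard subgroup determined by s₀. Suppose s₁, s₂ ∈ G satisfy C(s₁) = C(s₂) = C(S), and suppose g ∈ G satisfies g s₁ g⁻¹ = s₂. Then g normalizes S, i.e., g S g⁻¹ = S. -/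
/-- Let `S := Z(C(s₀))` be the standard subgroup of `G` determined by `s₀`.  If
`s₁, s₂ ∈ G` satisfy `C(s₁) = C(s₂) = C(S)` and `g s₁ g⁻¹ = s₂`, then `g` normalizes `S`,
i.e. `g S g⁻¹ = S`. -/
theorem conjugation_normalizes_standard_subgroup (G : Type*) [Group G] (s₀ : G)
    (S : Subgroup G)
    (hS : S = Subgroup.centralizer {s₀} ⊓
        Subgroup.centralizer (Subgroup.centralizer {s₀} : Subgroup G))
    (s₁ s₂ g : G)
    (h₁ : Subgroup.centralizer {s₁} = Subgroup.centralizer (S : Set G))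
    (h₂ : Subgroup.centralizer {s₂} = Subgroup.centralizer (S : Set G))
    (hg : g * s₁ * g⁻¹ = s₂) :
    Subgroup.map (MulAut.conj g).toMonoidHom S = S := by
  set K : Subgroup G := Subgroup.centralizer {s₀} with hK
  have hs₀S : s₀ ∈ S := by
    rw [hS]
    refine ⟨Subgroup.mem_centralizer_singleton_iff.2 rfl, ?_⟩
    exact Subgroup.mem_centralizer_iff.2 fun h hh =>
      Subgroup.mem_centralizer_singleton_iff.1 hh
  have hCS : Subgroup.centralizer (S : Set G) = K := by
    apply le_antisymm
    · intro x hx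
      rw [Subgroup.mem_centralizer_iff] at hx
      exact Subgroup.mem_centralizer_singleton_iff.2 (hx s₀ hs₀S).symm
    · intro x hx
      refine Subgroup.mem_centralizer_iff.2 fun s hs => ?_
      rw [hS] at hs
      exact (Subgroup.mem_centralizer_iff.1 hs.2 x hx).symm
  have hconjK : ∀ y : G, g * y * g⁻¹ ∈ K ↔ y ∈ K := by
    intro y
    have e1 : y ∈ K ↔ y * s₁ = s₁ * y := by
      rw [← hCS, ← h₁, Subgroup.mem_centralizer_singleton_iff]
    have e2 : g * y * g⁻¹ ∈ K ↔ (g * y * g⁻¹) * s₂ = s₂ * (g * y * g⁻¹) := by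
      rw [← hCS, ← h₂, Subgroup.mem_centralizer_singleton_iff]
    rw [e1, e2, ← hg,
      show g * y * g⁻¹ * (g * s₁ * g⁻¹) = g * (y * s₁) * g⁻¹ by group,
      show g * s₁ * g⁻¹ * (g * y * g⁻¹) = g * (s₁ * y) * g⁻¹ by group]
    exact ⟨fun h => mul_left_cancel (mul_right_cancel h), fun h => by rw [h]⟩
  have hconjS : ∀ x : G, x ∈ S → g * x * g⁻¹ ∈ S := by
    intro x hx
    rw [hS] at hx ⊢
    refine ⟨(hconjK x).2 hx.1, Subgroup.mem_centralizer_iff.2 fun k hk => ?_⟩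
    have hk' : g⁻¹ * k * g ∈ K := by
      have := (hconjK (g⁻¹ * k * g)).1
      simp only [show g * (g⁻¹ * k * g) * g⁻¹ = k by group] at this
      exact this hk
    have hc : (g⁻¹ * k * g) * x = x * (g⁻¹ * k * g) :=
      Subgroup.mem_centralizer_iff.1 hx.2 _ hk'
    calc k * (g * x * g⁻¹) = g * ((g⁻¹ * k * g) * x) * g⁻¹ := by group
      _ = g * (x * (g⁻¹ * k * g)) * g⁻¹ := by rw [hc]
      _ = (g * x * g⁻¹) * k := by group
  have hconjS' : ∀ x : G, x ∈ S → g⁻¹ * x * g ∈ S := by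
    intro x hx
    rw [hS] at hx ⊢
    refine ⟨(hconjK (g⁻¹ * x * g)).1 (by simpa [show g * (g⁻¹ * x * g) * g⁻¹ = x by group]
      using hx.1), Subgroup.mem_centralizer_iff.2 fun k hk => ?_⟩
    have hk' : g * k * g⁻¹ ∈ K := (hconjK k).2 hk
    have hc : (g * k * g⁻¹) * x = x * (g * k * g⁻¹) :=
      Subgroup.mem_centralizer_iff.1 hx.2 _ hk'
    calc k * (g⁻¹ * x * g) = g⁻¹ * ((g * k * g⁻¹) * x) * g := by group
      _ = g⁻¹ * (x * (g * k * g⁻¹)) * g := by rw [hc]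
      _ = (g⁻¹ * x * g) * k := by group
  ext x
  simp only [Subgroup.mem_map, MulEquiv.coe_toMonoidHom, MulAut.conj_apply]
  constructor
  · rintro ⟨y, hy, rfl⟩
    exact hconjS y hy
  · intro hx
    exact ⟨g⁻¹ * x * g, hconjS' x hx, by group⟩
end

section
/- Let G be a locally compact Hausdorff topological group with left Haar measure μ_G, let K be a compact subgroup equipped with its Haar probability measure μ_K, and let P be a closed subgroup with left Haar measure μ_P. Assume the measures are compatible in the sense that the pushforward of the product measure μ_P × μ_K under the multiplication map P × K → G, (p,k) ↦ pk, equals μ_G. Then for all continuous compactly supported functions f₁, f₂ : G → ℂ, all k₁, k₂ ∈ K, and all p ∈ P: (f₁ ⋆ f₂)(k₁ p k₂⁻¹) = ∫_K ∫_P f₁(k₁ q k⁻¹) f₂(k q⁻¹ p k₂⁻¹) dμ_P(q) dμ_K(k). (Equivalently, the map φ_P^G(f)(k₁,k₂,p) := f(k₁ p k₂⁻¹) is a homomorphism from the convolution algebra of G to the algebra C(K × K) ⊗ C_c(P) with product (h₁h₂)(k₁,k₂,p) = ∫_K ∫_P h₁(k₁,k,q) h₂(k,k₂,q⁻¹p)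 dμ_P(q) dμ_K(k).) -/
/-!
Translating by `k₁` and pushing `μG` back to `μP × μK` turns the convolution at `g = k₁ p k₂⁻¹`
into the integral over `P × K` of `h ↦ f₁(k₁ h) f₂(h⁻¹ k₁⁻¹ g)` at `h = q k`. This integrand is
continuous with compact support, so Fubini applies even though `μP` need not be σ-finite.
Finally, a Haar measure on the compact group `K` is invariant under inversion, and substituting
`k ↦ k⁻¹` gives `(k₁ q k⁻¹)⁻¹ k₁ p k₂⁻¹ = k q⁻¹ p k₂⁻¹`.
-/

open MeasureTheory Set Pointwise

namespace MeasureTheory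

namespace Measure

/-- Variant of `Measure.restrict_prod_eq_prod_univ` for a first factor that is not s-finite,
such as a Haar measure on a group that is not σ-compact. -/
theorem restrict_prod_eq_prod_univ_of_measurableSet {α β : Type*} [MeasurableSpace α]
    [MeasurableSpace β] (μ : Measure α) (ν : Measure β) [SFinite ν] {s : Set α}
    (hs : MeasurableSet s) :
    (μ.restrict s).prod ν = (μ.prod ν).restrict (s ×ˢ univ) := by
  ext A hA
  have hsection : ∀ x, ν (Prod.mk x ⁻¹' (A ∩ s ×ˢ univ)) =
      s.indicator (fun x => ν (Prod.mk x ⁻¹' A)) x := by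
    intro x
    by_cases hx : x ∈ s <;> simp [hx, Set.preimage]
  rw [prod_apply hA, restrict_apply hA, prod_apply (hA.inter (hs.prod .univ)),
    ← lintegral_indicator hs]
  simp_rw [hsection]

end Measure

theorem integral_prod_symm_of_hasCompactSupport {X Y E : Type*}
    [TopologicalSpace X] [TopologicalSpace Y] [MeasurableSpace X] [MeasurableSpace Y]
    [OpensMeasurableSpace X] [OpensMeasurableSpace Y] [NormedAddCommGroup E] [NormedSpace ℝ E]
    {μ : Measure X} {ν : Measure Y} [IsFiniteMeasureOnCompacts μ] [SFinite ν]
    [IsFiniteMeasureOnCompacts ν] {f : X × Y → E} (hf : Continuous f) (h'f : HasCompactSupport f) :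
    ∫ z, f z ∂μ.prod ν = ∫ y, ∫ x, f (x, y) ∂μ ∂ν := by
  set U := toMeasurable μ (Prod.fst '' tsupport f)
  set V := Prod.snd '' tsupport f
  have : Fact (μ U < ⊤) := ⟨by
    rw [measure_toMeasurable]; exact (h'f.image continuous_fst).measure_lt_top⟩
  have : Fact (ν V < ⊤) := ⟨(h'f.image continuous_snd).measure_lt_top⟩
  have hUV : tsupport f ⊆ U ×ˢ V := fun z hz =>
    ⟨subset_toMeasurable _ _ (mem_image_of_mem _ hz), mem_image_of_mem _ hz⟩
  have hvanish : ∀ z ∉ U ×ˢ V, f z = 0 := fun z hz =>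
    image_eq_zero_of_notMem_tsupport fun h => hz (hUV h)
  have hrestrict : (μ.prod ν).restrict (U ×ˢ V) = (μ.restrict U).prod (ν.restrict V) := by
    rw [← Measure.restrict_univ (μ := μ.restrict U), Measure.prod_restrict,
      Measure.restrict_prod_eq_prod_univ_of_measurableSet _ _ (measurableSet_toMeasurable _ _),
      Measure.restrict_restrict' ((measurableSet_toMeasurable _ _).prod .univ),
      prod_inter_prod, univ_inter, inter_univ]
  have hint : Integrable f ((μ.restrict U).prod (ν.restrict V)) := by
    obtain ⟨C, hC⟩ := hf.bounded_above_of_compact_support h'f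
    exact .of_bound (h'f.stronglyMeasurable_of_prod hf).aestronglyMeasurable C (.of_forall hC)
  calc ∫ z, f z ∂μ.prod ν = ∫ z, f z ∂(μ.restrict U).prod (ν.restrict V) := by
        rw [← hrestrict, setIntegral_eq_integral_of_forall_compl_eq_zero hvanish]
    _ = ∫ y in V, ∫ x in U, f (x, y) ∂μ ∂ν := integral_prod_symm f hint
    _ = ∫ y, ∫ x, f (x, y) ∂μ ∂ν := by
        rw [setIntegral_eq_integral_of_forall_compl_eq_zero fun y hy => ?_]
        · congr 1 with y
          exact setIntegral_eq_integral_of_forall_compl_eq_zero fun x hx =>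
            hvanish _ fun h => hx h.1
        · simp [fun x => hvanish (x, y) fun h => hy h.2]

namespace Measure

variable {G : Type*} [Group G] [TopologicalSpace G] [IsTopologicalGroup G] [CompactSpace G]
  [MeasurableSpace G] [BorelSpace G]

theorem eq_of_isMulLeftInvariant_of_measure_univ_eq (μ' μ : Measure G) [IsHaarMeasure μ]
    [IsMulLeftInvariant μ'] [IsFiniteMeasureOnCompacts μ'] (h : μ' univ = μ univ) : μ' = μ := by
  have hscalar := isMulInvariant_eq_smul_of_compactSpace μ' μ
  have hone : (haarScalarFactor μ' μ : ENNReal) * μ univ = 1 * μ univ := by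
    conv_rhs => rw [one_mul, ← h, hscalar]
    rfl
  rw [ENNReal.mul_left_inj (NeZero.ne _) (measure_ne_top _ _), ENNReal.coe_eq_one] at hone
  rw [hscalar, hone, one_smul]

theorem IsHaarMeasure.isMulRightInvariant_of_compactSpace (μ : Measure G) [IsHaarMeasure μ] :
    IsMulRightInvariant μ where
  map_mul_right_eq_self g :=
    eq_of_isMulLeftInvariant_of_measure_univ_eq _ _ <| by
      rw [map_apply (measurable_mul_const g) .univ, preimage_univ]

theorem IsHaarMeasure.isInvInvariant_of_compactSpace (μ : Measure G) [IsHaarMeasure μ] :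
    IsInvInvariant μ where
  inv_eq_self := by
    have := isMulRightInvariant_of_compactSpace μ
    exact eq_of_isMulLeftInvariant_of_measure_univ_eq _ _ <| by rw [inv_apply, inv_univ]

end Measure

end MeasureTheory

theorem HasCompactSupport.comp_mul_of_isClosed_of_isCompact {G E : Type*} [Group G]
    [TopologicalSpace G] [IsTopologicalGroup G] [Zero E] {P K : Subgroup G}
    (hP : IsClosed (P : Set G)) (hK : IsCompact (K : Set G)) {ψ : G → E}
    (hψ : HasCompactSupport ψ) :
    HasCompactSupport fun x : P × K => ψ (x.1 * x.2) := by
  have : CompactSpace K := isCompact_iff_compactSpace.mp hK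
  set S : Set P := Subtype.val ⁻¹' (tsupport ψ * (K : Set G))
  have hS : IsCompact S :=
    hP.isClosedEmbedding_subtypeVal.isProperMap.isCompact_preimage (hψ.mul hK)
  have hS' : IsClosed S :=
    ((isClosed_tsupport ψ).mul_right_of_isCompact hK).preimage continuous_subtype_val
  refine .intro' (hS.prod isCompact_univ) (hS'.prod isClosed_univ) fun x hx => ?_
  refine image_eq_zero_of_notMem_tsupport fun h => hx ⟨?_, mem_univ _⟩
  simpa [S] using mul_mem_mul h (x.2⁻¹).2

theorem integral_eq_integral_integral_mul_of_map_mul_prod_eq {G E : Type*} [Group G]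
    [TopologicalSpace G] [IsTopologicalGroup G] [MeasurableSpace G] [BorelSpace G]
    [NormedAddCommGroup E] [NormedSpace ℝ E] {μG : Measure G} [NeZero μG] {P K : Subgroup G}
    (hP : IsClosed (P : Set G)) (hK : IsCompact (K : Set G)) {μP : Measure P}
    [IsFiniteMeasureOnCompacts μP] {μK : Measure K} [IsFiniteMeasureOnCompacts μK]
    (hcompat : Measure.map (fun pk : P × K => (pk.1 : G) * pk.2) (μP.prod μK) = μG)
    {ψ : G → E} (hψ : Continuous ψ) (hψs : HasCompactSupport ψ) :
    ∫ g, ψ g ∂μG = ∫ k, ∫ q, ψ (q * k) ∂μP ∂μK := by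
  have : CompactSpace K := isCompact_iff_compactSpace.mp hK
  -- The product σ-algebra on `P × K` can be smaller than the Borel one, so measurability of the
  -- multiplication is not automatic; it is forced by `μG ≠ 0`.
  have hm : AEMeasurable (fun pk : P × K => (pk.1 : G) * pk.2) (μP.prod μK) :=
    .of_map_ne_zero (hcompat ▸ NeZero.ne μG)
  rw [← hcompat, integral_map hm
    (hψ.stronglyMeasurable_of_hasCompactSupport hψs).aestronglyMeasurable]
  exact integral_prod_symm_of_hasCompactSupport (by fun_prop)
    (hψs.comp_mul_of_isClosed_of_isCompact hP hK)

theorem convolution_eq_double_integral_of_compatible_haar_general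
    (G : Type*) [Group G] [TopologicalSpace G] [IsTopologicalGroup G]
    [MeasurableSpace G] [BorelSpace G]
    (μG : Measure G) [μG.IsHaarMeasure]
    (K P : Subgroup G) (hK : IsCompact (K : Set G)) (hP : IsClosed (P : Set G))
    (μK : Measure K) [μK.IsHaarMeasure]
    (μP : Measure P) [μP.IsHaarMeasure]
    (hcompat : Measure.map (fun pk : P × K => (pk.1 : G) * (pk.2 : G)) (μP.prod μK) = μG)
    (f₁ f₂ : G → ℂ) (hf₁ : Continuous f₁) (hsupp₁ : HasCompactSupport f₁)
    (hf₂ : Continuous f₂)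
    (k₁ k₂ : K) (p : P) :
    (∫ h : G, f₁ h * f₂ (h⁻¹ * ((k₁ : G) * (p : G) * (k₂ : G)⁻¹)) ∂μG) =
      ∫ k : K, ∫ q : P,
        f₁ ((k₁ : G) * (q : G) * (k : G)⁻¹) *
          f₂ ((k : G) * (q : G)⁻¹ * (p : G) * (k₂ : G)⁻¹) ∂μP ∂μK := by
  have : CompactSpace K := isCompact_iff_compactSpace.mp hK
  have := Measure.IsHaarMeasure.isInvInvariant_of_compactSpace μK
  set φ : G → ℂ := fun h => f₁ h * f₂ (h⁻¹ * ((k₁ : G) * (p : G) * (k₂ : G)⁻¹))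
  have hφs : HasCompactSupport φ := hsupp₁.mul_right
  have hφs_translate : HasCompactSupport fun h => φ (k₁ * h) :=
    hφs.comp_homeomorph (.mulLeft (k₁ : G))
  calc ∫ h, φ h ∂μG = ∫ h, φ (k₁ * h) ∂μG := (integral_mul_left_eq_self φ (k₁ : G)).symm
    _ = ∫ k, ∫ q, φ (k₁ * (q * k)) ∂μP ∂μK :=
      integral_eq_integral_integral_mul_of_map_mul_prod_eq hP hK hcompat (by fun_prop)
        hφs_translate
    _ = ∫ k, ∫ q, φ (k₁ * (q * k⁻¹)) ∂μP ∂μK :=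
      (integral_inv_eq_self (fun k : K => ∫ q, φ (k₁ * (q * k)) ∂μP) μK).symm
    _ = _ := by
      refine integral_congr_ae (.of_forall fun k => integral_congr_ae (.of_forall fun q => ?_))
      simp only [φ, Subgroup.coe_inv, mul_inv_rev, inv_inv]
      congr 2 <;> group

/-- Harish-Chandra's compatibility lemma: if the Haar measures of `G`, of a compact subgroup
`K` (normalized to be a probability measure) and of a closed subgroup `P` are compatible, in
the sense that the pushforward of `μP × μK` under `(p, k) ↦ p k` is `μG`, then for all
continuous compactly supported `f₁ f₂ : G → ℂ` and all `k₁ k₂ ∈ K`, `p ∈ P`,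
`(f₁ ⋆ f₂)(k₁ p k₂⁻¹) = ∫_K ∫_P f₁(k₁ q k⁻¹) f₂(k q⁻¹ p k₂⁻¹) dμP(q) dμK(k)`. -/
theorem convolution_eq_double_integral_of_compatible_haar
    (G : Type*) [Group G] [TopologicalSpace G] [IsTopologicalGroup G]
    [LocallyCompactSpace G] [T2Space G] [MeasurableSpace G] [BorelSpace G]
    (μG : Measure G) [μG.IsHaarMeasure]
    (K P : Subgroup G) (hK : IsCompact (K : Set G)) (hP : IsClosed (P : Set G))
    (μK : Measure K) [μK.IsHaarMeasure] [IsProbabilityMeasure μK]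
    (μP : Measure P) [μP.IsHaarMeasure]
    (hcompat : Measure.map (fun pk : P × K => (pk.1 : G) * (pk.2 : G)) (μP.prod μK) = μG)
    (f₁ f₂ : G → ℂ) (hf₁ : Continuous f₁) (hsupp₁ : HasCompactSupport f₁)
    (hf₂ : Continuous f₂) (hsupp₂ : HasCompactSupport f₂)
    (k₁ k₂ : K) (p : P) :
    (∫ h : G, f₁ h * f₂ (h⁻¹ * ((k₁ : G) * (p : G) * (k₂ : G)⁻¹)) ∂μG) =
      ∫ k : K, ∫ q : P,
        f₁ ((k₁ : G) * (q : G) * (k : G)⁻¹) *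
          f₂ ((k : G) * (q : G)⁻¹ * (p : G) * (k₂ : G)⁻¹) ∂μP ∂μK :=
  convolution_eq_double_integral_of_compatible_haar_general G μG K P hK hP μK μP hcompat f₁ f₂ hf₁
    hsupp₁ hf₂ k₁ k₂ p
end

section
/- Let F be a field. (i) Every element g ∈ SL₂(F) with g ≠ 1 and (g − 1)² = 0 (i.e., every nontrivial unipotent element) is conjugate in SL₂(F) to u_b for some b ∈ Fˣ. (ii) For b, c ∈ Fˣ, the elements u_b and u_c are conjugate in SL₂(F) if and only if c·b⁻¹ is a square in Fˣ. Hence b ↦ [u_b] induces a bijection from Fˣ/(Fˣ)² onto the set of conjugacy classes of nontrivial unipotent elements of SL₂(F). -/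
/-!
For `g ∈ SL₂`, Cayley–Hamilton gives `(g - 1)² = (tr g - 2) • g`, so over a field `g` is
unipotent exactly when `tr g = 2`. If such a `g = !![a, b; c, d]` has `b ≠ 0`, the lower
unitriangular matrix with entry `(a - 1) / b` conjugates it to `u_b`; if `b = 0` it is lower
unitriangular and the rotation `!![0, -1; 1, 0]` conjugates it to `u_{-c}`. Conjugating by
`diag(a, a⁻¹)` turns `u_b` into `u_{a² b}`; conversely a matrix conjugating `u_b` to `u_c` with
`c ≠ 0` is upper triangular with diagonal `(x, x⁻¹)`, whence `c = x² b`. The bijection is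
`b ↦ [u_b]` factored through its fibres.
-/

open Matrix

variable (F : Type*) [Field F]

/-- The unipotent upper triangular matrix `u_b = !![1, b; 0, 1]` in `SL₂(F)`. -/
def uMat (b : F) : Matrix.SpecialLinearGroup (Fin 2) F :=
  ⟨!![1, b; 0, 1], by simp [Matrix.det_fin_two_of]⟩

namespace Matrix.SpecialLinearGroup

theorem isConj_of_mul_eq_mul {n R : Type*} [Fintype n] [DecidableEq n] [CommRing R]
    {g h : SpecialLinearGroup n R} (m : Matrix n n R) (hm : m.det = 1)
    (hmul : m * g = h * m) : IsConj g h :=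
  ⟨toUnits ⟨m, hm⟩, Subtype.ext hmul⟩

section FinTwo

variable {R : Type*} [CommRing R]

theorem mul_sub_mul_eq_one_of_coe_eq {g : SpecialLinearGroup (Fin 2) R} {a b c d : R}
    (hg : (g : Matrix (Fin 2) (Fin 2) R) = !![a, b; c, d]) : a * d - b * c = 1 := by
  simpa [hg, det_fin_two_of] using g.det_coe

theorem sub_one_sq_eq_trace_sub_two_smul (g : SpecialLinearGroup (Fin 2) R) :
    ((g : Matrix (Fin 2) (Fin 2) R) - 1) ^ 2 =
      (trace (g : Matrix (Fin 2) (Fin 2) R) - 2) • g := by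
  have hdet := g.det_coe
  rw [det_fin_two] at hdet
  rw [trace_fin_two, eta_fin_two (g : Matrix (Fin 2) (Fin 2) R), one_fin_two]
  ext i j
  fin_cases i <;> fin_cases j <;> simp [sq] <;> first | ring1 | linear_combination -hdet

end FinTwo

theorem sub_one_sq_eq_zero_iff_trace_eq_two {K : Type*} [Field K]
    {g : SpecialLinearGroup (Fin 2) K} :
    ((g : Matrix (Fin 2) (Fin 2) K) - 1) ^ 2 = 0 ↔ trace (g : Matrix (Fin 2) (Fin 2) K) = 2 := by
  have hg : (g : Matrix (Fin 2) (Fin 2) K) ≠ 0 := fun h0 => by simpa [h0] using g.det_coe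
  rw [sub_one_sq_eq_trace_sub_two_smul, smul_eq_zero, or_iff_left hg, sub_eq_zero]

end Matrix.SpecialLinearGroup

open Matrix.SpecialLinearGroup

variable {F}

theorem uMat_ne_one {b : F} (hb : b ≠ 0) : uMat F b ≠ 1 :=
  fun h => hb (by simpa [uMat] using congrFun₂ (congrArg Subtype.val h) 0 1)

theorem trace_uMat (b : F) : trace (uMat F b : Matrix (Fin 2) (Fin 2) F) = 2 := by
  simp [uMat, trace_fin_two_of, one_add_one_eq_two]

theorem isConj_uMat_of_add_eq_two {g : SpecialLinearGroup (Fin 2) F} {a b c d : F}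
    (hg : (g : Matrix (Fin 2) (Fin 2) F) = !![a, b; c, d]) (htr : a + d = 2) (hb : b ≠ 0) :
    IsConj g (uMat F b) := by
  have hdet := mul_sub_mul_eq_one_of_coe_eq hg
  refine isConj_of_mul_eq_mul !![1, 0; (a - 1) / b, 1] (by simp [det_fin_two_of]) ?_
  rw [hg]
  ext i j
  fin_cases i <;> fin_cases j <;> simp [uMat] <;> field_simp
  · ring
  · linear_combination a * htr - hdet
  · linear_combination htr

theorem isConj_uMat_neg_of_coe_eq {g : SpecialLinearGroup (Fin 2) F} {c : F}
    (hg : (g : Matrix (Fin 2) (Fin 2) F) = !![1, 0; c, 1]) : IsConj g (uMat F (-c)) := by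
  refine isConj_of_mul_eq_mul !![0, -1; 1, 0] (by simp [det_fin_two_of]) ?_
  rw [hg]
  ext i j
  fin_cases i <;> fin_cases j <;> simp [uMat]

theorem exists_isConj_uMat_of_trace_eq_two {g : SpecialLinearGroup (Fin 2) F} (hg1 : g ≠ 1)
    (htr : trace (g : Matrix (Fin 2) (Fin 2) F) = 2) : ∃ b : Fˣ, IsConj g (uMat F b) := by
  obtain ⟨a, b, c, d, hg⟩ : ∃ a b c d : F, (g : Matrix (Fin 2) (Fin 2) F) = !![a, b; c, d] :=
    ⟨_, _, _, _, eta_fin_two _⟩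
  rw [hg, trace_fin_two_of] at htr
  by_cases hb : b = 0
  · subst hb
    have hdet := mul_sub_mul_eq_one_of_coe_eq hg
    have ha : a = 1 := sub_eq_zero.mp <| (pow_eq_zero_iff two_ne_zero).mp <| by
      linear_combination a * htr - hdet
    have hd : d = 1 := by linear_combination htr - ha
    subst ha hd
    have hc : c ≠ 0 := by
      rintro rfl
      exact hg1 (Subtype.ext (hg.trans one_fin_two.symm))
    exact ⟨Units.mk0 (-c) (neg_ne_zero.mpr hc), isConj_uMat_neg_of_coe_eq hg⟩
  · exact ⟨Units.mk0 b hb, isConj_uMat_of_add_eq_two hg htr hb⟩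

theorem exists_isConj_uMat_of_sub_one_sq_eq_zero {g : SpecialLinearGroup (Fin 2) F} (hg1 : g ≠ 1)
    (hg : ((g : Matrix (Fin 2) (Fin 2) F) - 1) ^ 2 = 0) : ∃ b : Fˣ, IsConj g (uMat F b) :=
  exists_isConj_uMat_of_trace_eq_two hg1 (sub_one_sq_eq_zero_iff_trace_eq_two.mp hg)

theorem isConj_uMat_sq_mul (a : Fˣ) (b : F) : IsConj (uMat F b) (uMat F ((a : F) ^ 2 * b)) := by
  refine isConj_of_mul_eq_mul !![(a : F), 0; 0, (a⁻¹ : F)] (by simp [det_fin_two_of]) ?_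
  ext i j
  fin_cases i <;> fin_cases j <;> simp [uMat]
  field_simp

theorem exists_sq_mul_eq_of_isConj_uMat {b c : F} (hc : c ≠ 0)
    (h : IsConj (uMat F b) (uMat F c)) : ∃ a : Fˣ, (a : F) ^ 2 * b = c := by
  obtain ⟨m, hm⟩ := h
  obtain ⟨x, y, z, w, hm_eq⟩ : ∃ x y z w : F,
      ((m : SpecialLinearGroup (Fin 2) F) : Matrix (Fin 2) (Fin 2) F) = !![x, y; z, w] :=
    ⟨_, _, _, _, eta_fin_two _⟩
  have hdet := mul_sub_mul_eq_one_of_coe_eq hm_eq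
  have hmul : !![x, y; z, w] * !![1, b; 0, 1] = !![1, c; 0, 1] * !![x, y; z, w] := by
    rw [← hm_eq]
    exact congrArg Subtype.val hm
  have hz : z = 0 := by simpa [hc] using congrFun₂ hmul 0 0
  have h01 : x * b + y = y + c * w := by simpa using congrFun₂ hmul 0 1
  subst hz
  have hx : x ≠ 0 := left_ne_zero_of_mul_eq_one (b := w) (by linear_combination hdet)
  exact ⟨Units.mk0 x hx, by simp only [Units.val_mk0]; linear_combination x * h01 + c * hdet⟩

theorem isConj_uMat_iff (b c : Fˣ) :
    IsConj (uMat F b) (uMat F c) ↔ ∃ a : Fˣ, c * b⁻¹ = a ^ 2 := by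
  simp only [mul_inv_eq_iff_eq_mul, Units.ext_iff, Units.val_mul, Units.val_pow_eq_pow_val]
  constructor
  · intro h
    obtain ⟨a, ha⟩ := exists_sq_mul_eq_of_isConj_uMat c.ne_zero h
    exact ⟨a, ha.symm⟩
  · rintro ⟨a, ha⟩
    simpa [ha] using isConj_uMat_sq_mul a (b : F)

/-- In `SL₂(F)`: (i) every nontrivial unipotent element is conjugate to some `u_b`, `b ∈ Fˣ`;
(ii) `u_b` and `u_c` are conjugate iff `c b⁻¹` is a square in `Fˣ`; hence `b ↦ [u_b]` induces a
bijection from `Fˣ/(Fˣ)²` onto the set of conjugacy classes of nontrivial unipotent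
elements. -/
theorem sl2_unipotent_conjugacy_classes :
    (∀ g : Matrix.SpecialLinearGroup (Fin 2) F, g ≠ 1 →
      ((g : Matrix (Fin 2) (Fin 2) F) - 1) ^ 2 = 0 →
      ∃ b : Fˣ, IsConj g (uMat F (b : F))) ∧
    (∀ b c : Fˣ, IsConj (uMat F (b : F)) (uMat F (c : F)) ↔ ∃ a : Fˣ, c * b⁻¹ = a ^ 2) ∧
    (∃ e : (Fˣ ⧸ (powMonoidHom 2 : Fˣ →* Fˣ).range) ≃
        {q : ConjClasses (Matrix.SpecialLinearGroup (Fin 2) F) //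
          ∃ g, q = ConjClasses.mk g ∧ g ≠ 1 ∧ ((g : Matrix (Fin 2) (Fin 2) F) - 1) ^ 2 = 0},
      ∀ b : Fˣ, (e (QuotientGroup.mk b) : ConjClasses (Matrix.SpecialLinearGroup (Fin 2) F)) =
        ConjClasses.mk (uMat F (b : F))) := by
  refine ⟨fun g => exists_isConj_uMat_of_sub_one_sq_eq_zero, isConj_uMat_iff, ?_⟩
  let f : Fˣ → {q : ConjClasses (SpecialLinearGroup (Fin 2) F) //
      ∃ g, q = ConjClasses.mk g ∧ g ≠ 1 ∧ ((g : Matrix (Fin 2) (Fin 2) F) - 1) ^ 2 = 0} :=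
    fun b => ⟨ConjClasses.mk (uMat F b), uMat F b, rfl, uMat_ne_one b.ne_zero,
      sub_one_sq_eq_zero_iff_trace_eq_two.mpr (trace_uMat (b : F))⟩
  have hf : Function.Surjective f := by
    rintro ⟨_, g, rfl, hg1, hg⟩
    obtain ⟨b, hb⟩ := exists_isConj_uMat_of_sub_one_sq_eq_zero hg1 hg
    exact ⟨b, Subtype.ext (ConjClasses.mk_eq_mk_iff_isConj.mpr hb.symm)⟩
  have hfibres : ∀ b c : Fˣ, QuotientGroup.leftRel (powMonoidHom 2 : Fˣ →* Fˣ).range b c ↔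
      Setoid.ker f b c := by
    intro b c
    rw [QuotientGroup.leftRel_apply, Setoid.ker_def, Subtype.ext_iff,
      ConjClasses.mk_eq_mk_iff_isConj, isConj_uMat_iff, mul_comm]
    simp only [MonoidHom.mem_range, powMonoidHom_apply, eq_comm]
  exact ⟨(Quotient.congrRight hfibres).trans (Setoid.quotientKerEquivOfSurjective f hf),
    fun b => rfl⟩
end

section
/- Let r be a natural number and let χ : ℤ^r → ℂˣ be a nontrivial group homomorphism, and let ℂ_χ denote the one-dimensional representation of ℤ^r on ℂ in which g acts as multiplication by χ(g). Then the group homology H_q(ℤ^r, ℂ_χ) vanishes for every q ≥ 0. -/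
/-!
Choose `g` with `χ g ≠ 1`. The central element `s = (1 - χ g)⁻¹ (1 - g)` of `ℂ[G]` acts by
`0` on the trivial module and by `1` on `ℂ_χ`. Acting by `s` on a projective resolution of
`ℂ_χ` is a chain map lifting the identity, so it induces the identity on `Tor_q`; after
tensoring with the trivial module it becomes zero. Hence the identity of `Tor_q` is zero.
-/

open CategoryTheory

/-- The one-dimensional representation `ℂ_χ` of a group `G` attached to a character
`χ : G →* ℂˣ`, where `g` acts as multiplication by `χ g`. -/
noncomputable def charRep (G : Type) [CommGroup G] (χ : G →* ℂˣ) : Representation ℂ G ℂ where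
  toFun g := (χ g : ℂ) • LinearMap.id
  map_one' := by ext x; simp
  map_mul' g h := by ext x; simp [mul_smul]; ring

/-- Group homology of a commutative group `G` with coefficients in a representation
`ρ : Representation ℂ G ℂ`, defined as `Tor_q^{ℂ[G]}(ℂ_triv, ℂ_ρ)` (which is what the
standard bar resolution computes). -/
noncomputable def grpHomology (G : Type) [CommGroup G] (ρ : Representation ℂ G ℂ) (q : ℕ) :
    ModuleCat (MonoidAlgebra ℂ G) :=
  ((Tor (ModuleCat (MonoidAlgebra ℂ G)) q).obj
      (ModuleCat.of (MonoidAlgebra ℂ G)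
        (Representation.trivial ℂ (G := G) (V := ℂ)).asModule)).obj
    (ModuleCat.of (MonoidAlgebra ℂ G) ρ.asModule)

open Limits MonoidalCategory

namespace CategoryTheory

lemma Functor.leftDerived_map_app_eq_zero {C D : Type*} [Category C] [Category D]
    [Abelian C] [HasProjectiveResolutions C] [Abelian D]
    (F : C ⥤ D) [F.Additive] (μ : 𝟭 C ⟶ 𝟭 C)
    (hF : ∀ Y : C, F.map (μ.app Y) = 0) (n : ℕ) (X : C) :
    (F.leftDerived n).map (μ.app X) = 0 := by
  obtain ⟨P⟩ := (inferInstance : HasProjectiveResolution X).out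
  let μP : P.complex ⟶ P.complex :=
    { f := fun i => μ.app _
      comm' := fun i j _ => (μ.naturality (P.complex.d i j)).symm }
  have hμP : μP ≫ P.π = P.π ≫ (ChainComplex.single₀ C).map (μ.app X) := by
    apply HomologicalComplex.to_single_hom_ext
    simp only [HomologicalComplex.comp_f, ChainComplex.single₀_map_f_zero]
    exact (μ.naturality (P.π.f 0)).symm
  have hFμP : (F.mapHomologicalComplex _).map μP = 0 := by
    ext i
    exact hF _
  rw [F.leftDerived_map_eq n (μ.app X) μP hμP, Functor.comp_map, hFμP, Functor.map_zero,
    zero_comp, comp_zero]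

lemma MonoidalLinear.whiskerLeft_smul_eq_zero {R C : Type*} [Semiring R] [Category C]
    [Preadditive C] [Linear R C] [MonoidalCategory C] [MonoidalPreadditive C]
    [MonoidalLinear R C] {M : C} {r : R} (hM : r • 𝟙 M = 0) {Y Z : C} (f : Y ⟶ Z) :
    M ◁ (r • f) = 0 := by
  rw [MonoidalLinear.whiskerLeft_smul, ← Category.id_comp (M ◁ f), ← Linear.smul_comp,
    ← id_whiskerRight, ← MonoidalLinear.smul_whiskerRight, hM,
    MonoidalPreadditive.zero_whiskerRight, zero_comp]

lemma isZero_Tor_of_smul_id {R C : Type*} [Semiring R] [Category C] [Abelian C] [Linear R C]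
    [MonoidalCategory C] [MonoidalPreadditive C] [MonoidalLinear R C]
    [HasProjectiveResolutions C] {M N : C} (r : R)
    (hM : r • 𝟙 M = 0) (hN : r • 𝟙 N = 𝟙 N) (n : ℕ) :
    IsZero (((Tor C n).obj M).obj N) := by
  have h := ((tensoringLeft C).obj M).leftDerived_map_app_eq_zero (r • 𝟙 (𝟭 C))
    (fun Y => MonoidalLinear.whiskerLeft_smul_eq_zero hM (𝟙 Y)) n N
  rw [NatTrans.app_smul, NatTrans.id_app, Functor.id_obj, hN, Functor.map_id] at h
  exact (IsZero.iff_id_eq_zero _).mpr h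

end CategoryTheory

section CharacterRepresentation

variable {G : Type} [CommGroup G]

lemma smul_one_sub_of_id_trivial_eq_zero (c : ℂ) (g : G) :
    (c • (1 - MonoidAlgebra.of ℂ G g)) •
      𝟙 (ModuleCat.of (MonoidAlgebra ℂ G) (Representation.trivial ℂ G ℂ).asModule) =
      0 := by
  ext x
  apply (Representation.trivial ℂ G ℂ).asModuleEquiv.injective
  simp

lemma charRep_apply (χ : G →* ℂˣ) (g : G) :
    charRep G χ g = (χ g : ℂ) • LinearMap.id :=
  rfl

lemma smul_one_sub_of_id_charRep_eq_id (χ : G →* ℂˣ) {g : G} (hg : χ g ≠ 1) :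
    ((1 - (χ g : ℂ))⁻¹ • (1 - MonoidAlgebra.of ℂ G g)) •
      𝟙 (ModuleCat.of (MonoidAlgebra ℂ G) (charRep G χ).asModule) = 𝟙 _ := by
  have hχg : 1 - (χ g : ℂ) ≠ 0 := sub_ne_zero.mpr (Ne.symm (Units.val_eq_one.not.mpr hg))
  ext x
  apply (charRep G χ).asModuleEquiv.injective
  simp only [MonoidAlgebra.of_apply, ModuleCat.hom_smul, ModuleCat.hom_id, smul_assoc, sub_smul,
    one_smul, LinearMap.smul_apply, LinearMap.sub_apply, LinearMap.id_coe, id_eq,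
    Representation.single_smul, charRep_apply, smul_eq_mul, one_mul, map_smul]
  rw [inv_mul_eq_iff_eq_mul₀ hχg, sub_mul, one_mul]
  rfl

end CharacterRepresentation

/-- The group homology `H_q(ℤ^r, ℂ_χ)` with coefficients in a nontrivial character `χ`
vanishes in every degree `q`. -/
theorem groupHomology_zpow_nontrivial_char_vanishes (r : ℕ)
    (χ : Multiplicative (Fin r → ℤ) →* ℂˣ) (hχ : χ ≠ 1) (q : ℕ) :
    Subsingleton (grpHomology (Multiplicative (Fin r → ℤ))
      (charRep (Multiplicative (Fin r → ℤ)) χ) q) := by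
  obtain ⟨g, hg⟩ := DFunLike.ne_iff.mp hχ
  rw [← ModuleCat.isZero_iff_subsingleton]
  exact isZero_Tor_of_smul_id _ (smul_one_sub_of_id_trivial_eq_zero _ g)
    (smul_one_sub_of_id_charRep_eq_id χ hg) q
end

section
/- Let F be a field and let A, B be m×m matrices over F such that AB = BA and B is unipotent, i.e., (B − 1)^m = 0. Then the characteristic polynomial of the product AB equals the characteristic polynomial of A. (In particular, for an element g of a matrix group with Jordan decomposition g = s·u into commuting semisimple and unipotent parts, the characteristic polynomial of g — and hence each coefficient of det(t + 1 − Ad_g) — depends only on the semisimple part s.) -/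
/-!
Writing `A * B = A + A * (B - 1)`, the matrix `N = A * (B - 1)` is nilpotent and commutes with
`A`. Hence `X - A - N` is the characteristic matrix of `A` perturbed by a commuting nilpotent,
and such a perturbation does not change the determinant: after passing to the fraction field
of `F[X]`, where `X - A` is invertible, `det (M - N) = det M * det (1 - M⁻¹ N)` and the second
factor is `1` because `M⁻¹ N` is nilpotent.
-/

open Polynomial

namespace Matrix

variable {n R : Type*} [Fintype n] [DecidableEq n]

theorem charpoly_eq_X_pow_of_isNilpotent [CommRing R] [IsReduced R] {N : Matrix n n R}
    (hN : IsNilpotent N) : N.charpoly = X ^ Fintype.card n := by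
  refine sub_eq_zero.mp (Polynomial.ext fun i ↦ ?_)
  simpa using (Polynomial.isNilpotent_iff.mp
    (isNilpotent_charpoly_sub_pow_of_isNilpotent hN) i).eq_zero

theorem det_one_add_of_isNilpotent [CommRing R] [IsReduced R] {N : Matrix n n R}
    (hN : IsNilpotent N) : (1 + N).det = 1 := by
  simpa [charpoly_eq_X_pow_of_isNilpotent hN.neg] using (eval_charpoly (-N) 1).symm

theorem det_add_of_isUnit_of_commute_of_isNilpotent [CommRing R] [IsReduced R]
    {M N : Matrix n n R} (hM : IsUnit M) (hMN : Commute M N) (hN : IsNilpotent N) :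
    (M + N).det = M.det := by
  obtain ⟨u, rfl⟩ := hM
  have hnil : IsNilpotent ((↑u⁻¹ : Matrix n n R) * N) :=
    hMN.units_inv_left.isNilpotent_mul_left hN
  rw [show (u : Matrix n n R) + N = u * (1 + (↑u⁻¹ : Matrix n n R) * N) by
      rw [mul_add, mul_one, ← mul_assoc, Units.mul_inv, one_mul],
    det_mul, det_one_add_of_isNilpotent hnil, mul_one]

theorem det_add_of_commute_of_isNilpotent [CommRing R] [IsDomain R]
    {M N : Matrix n n R} (hM : M.det ≠ 0) (hMN : Commute M N) (hN : IsNilpotent N) :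
    (M + N).det = M.det := by
  let f := (algebraMap R (FractionRing R)).mapMatrix (m := n)
  have hinj : Function.Injective (algebraMap R (FractionRing R)) :=
    IsFractionRing.injective _ _
  apply hinj
  rw [RingHom.map_det, RingHom.map_det, map_add]
  refine det_add_of_isUnit_of_commute_of_isNilpotent ?_ (hMN.map f) (hN.map f)
  rw [isUnit_iff_isUnit_det, ← RingHom.map_det, isUnit_iff_ne_zero]
  exact (map_ne_zero_iff _ hinj).mpr hM

theorem charmatrix_add [CommRing R] (M N : Matrix n n R) :
    charmatrix (M + N) = charmatrix M - (C : R →+* R[X]).mapMatrix N := by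
  rw [charmatrix, charmatrix, map_add, sub_add_eq_sub_sub]

theorem charpoly_add_of_commute_of_isNilpotent [CommRing R] [IsDomain R]
    {M N : Matrix n n R} (hMN : Commute M N) (hN : IsNilpotent N) :
    (M + N).charpoly = M.charpoly := by
  have hcomm : Commute (charmatrix M) (-(C : R →+* R[X]).mapMatrix N) :=
    ((scalar_commute _ (Commute.all _) _).sub_left (hMN.map _)).neg_right
  rw [charpoly, charmatrix_add, sub_eq_add_neg,
    det_add_of_commute_of_isNilpotent (charpoly_monic M).ne_zero hcomm (hN.map _).neg, charpoly]

end Matrix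

/-- If `A, B ∈ M_m(F)` commute and `B` is unipotent (`(B - 1)^m = 0`), then the product `A B`
has the same characteristic polynomial as `A`.  (In particular, for a Jordan decomposition
`g = s u` into commuting semisimple and unipotent parts, the characteristic polynomial of `g`
depends only on `s`.) -/
theorem charpoly_mul_unipotent_commute
    (F : Type*) [Field F] (m : ℕ) (A B : Matrix (Fin m) (Fin m) F)
    (hcomm : A * B = B * A) (huni : (B - 1) ^ m = 0) :
    Matrix.charpoly (A * B) = Matrix.charpoly A := by
  have hAB : Commute A (B - 1) := Commute.sub_right hcomm (Commute.one_right A)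
  have hnil : IsNilpotent (A * (B - 1)) := ⟨m, by rw [hAB.mul_pow, huni, mul_zero]⟩
  have hsplit : A * B = A + A * (B - 1) := by rw [mul_sub, mul_one, add_sub_cancel]
  rw [hsplit, Matrix.charpoly_add_of_commute_of_isNilpotent ((Commute.refl A).mul_right hAB) hnil]
end
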